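/- Dual step bound for the proximal linearized scheme ALBUM 3 (Lemma 6.4 / L:DualSequenceLinALBUM3). Let F ∈ ℝ^{m×n} with λ_min(FFᵀ) > 0, set γ² := λ_min(FFᵀ), and let f₀ : ℝ^n → ℝ be differentiable with L-Lipschitz gradient on ℝ^n. Let ρ, μ > 0 and let points x^{k−1}, x^k, x^{k+1} ∈ ℝ^n, u^k, u^{k+1}, y^{k−1}, y^k, y^{k+1} ∈ ℝ^m satisfy, for j ∈ {k−1, k}: μ(x^{j+1} − x^j) = −(∇f₀(x^j) + Fᵀ y^j + ρFᵀ(F x^j − u^{j+1})) and y^{j+1} = y^j + ρ(F x^{j+1} − u^{j+1}). Then, with M := μI_n − ρFᵀF (operator norm ‖M‖), ‖y^{k+1} − y^k‖² ≤ (2‖M‖²/γ²)‖x^{k+1} − x^k‖² + (2(L + ‖M‖)²/γ²)‖x^k − x^{k−1}‖². -/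

import Mathlib

/-!
Each multiplier step, substituted into the preceding proximal linearized `x`-step, gives
`Fᵀ y^{j+1} = -∇f₀(x^j) - M (x^{j+1} - x^j)`. Subtracting the identities for `j = k - 1` and
`j = k` bounds `‖Fᵀ (y^{k+1} - y^k)‖` by `‖M‖ ‖x^{k+1} - x^k‖ + (L + ‖M‖) ‖x^k - x^{k-1}‖`, and
expanding in an orthonormal eigenbasis of `FFᵀ` gives `γ² ‖v‖² ≤ ‖Fᵀ v‖²`. Then
`(a + b)² ≤ 2a² + 2b²` finishes the proof.
-/

/-- Matrix–vector multiplication, with Euclidean norms on both sides. -/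
noncomputable def mulVecE {m n : ℕ} (A : Matrix (Fin m) (Fin n) ℝ)
    (v : EuclideanSpace ℝ (Fin n)) : EuclideanSpace ℝ (Fin m) :=
  WithLp.toLp 2 (A.mulVec v)

open Matrix
open scoped RealInnerProductSpace

theorem Matrix.IsHermitian.iInf_eigenvalues_mul_norm_sq_le_inner {ι : Type*} [Fintype ι]
    [DecidableEq ι] {H : Matrix ι ι ℝ} (hH : H.IsHermitian) (v : EuclideanSpace ℝ ι) :
    (⨅ i, hH.eigenvalues i) * ‖v‖ ^ 2 ≤ ⟪v, toEuclideanLin H v⟫ := by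
  set b := hH.eigenvectorBasis
  have hb (i : ι) : ⟪b i, toEuclideanLin H v⟫ = hH.eigenvalues i * ⟪v, b i⟫ := by
    rw [← (isSymmetric_toEuclideanLin_iff.mpr hH) (b i) v, toLpLin_apply,
      hH.mulVec_eigenvectorBasis, WithLp.toLp_smul, WithLp.toLp_ofLp, real_inner_smul_left,
      real_inner_comm]
  rw [← b.sum_inner_mul_inner, ← b.sum_sq_inner_left, Finset.mul_sum]
  refine Finset.sum_le_sum fun i _ => ?_
  rw [hb, ← mul_assoc, mul_comm _ (hH.eigenvalues i), mul_assoc, ← sq]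
  exact mul_le_mul_of_nonneg_right (ciInf_le (Set.finite_range _).bddBelow i) (sq_nonneg _)

theorem Matrix.iInf_eigenvalues_mul_norm_sq_le_norm_toEuclideanLin_transpose_sq
    {ι κ : Type*} [Fintype ι] [DecidableEq ι] [Fintype κ] [DecidableEq κ]
    (A : Matrix ι κ ℝ) (hH : (A * Aᵀ).IsHermitian) (v : EuclideanSpace ℝ ι) :
    (⨅ i, hH.eigenvalues i) * ‖v‖ ^ 2 ≤ ‖toEuclideanLin Aᵀ v‖ ^ 2 := by
  have hadj : toEuclideanLin Aᵀ = (toEuclideanLin A).adjoint := by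
    rw [← conjTranspose_eq_transpose_of_trivial, toEuclideanLin_conjTranspose_eq_adjoint]
  calc _ ≤ ⟪v, toEuclideanLin (A * Aᵀ) v⟫ := hH.iInf_eigenvalues_mul_norm_sq_le_inner v
    _ = ‖toEuclideanLin Aᵀ v‖ ^ 2 := by
      rw [toLpLin_mul_same, LinearMap.comp_apply, hadj, ← LinearMap.adjoint_inner_left,
        real_inner_self_eq_norm_sq]

theorem mulVecE_eq_toEuclideanLin {m n : ℕ} (A : Matrix (Fin m) (Fin n) ℝ)
    (v : EuclideanSpace ℝ (Fin n)) : mulVecE A v = toEuclideanLin A v := rfl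

theorem mulVecE_transpose_dual_eq_of_album3_step {m n : ℕ} (A : Matrix (Fin m) (Fin n) ℝ) {ρ μ : ℝ}
    {g x x' : EuclideanSpace ℝ (Fin n)} {u y y' : EuclideanSpace ℝ (Fin m)}
    (hx : μ • (x' - x) = -(g + mulVecE Aᵀ y + ρ • mulVecE Aᵀ (mulVecE A x - u)))
    (hy : y' = y + ρ • (mulVecE A x' - u)) :
    mulVecE Aᵀ y' = -g - toEuclideanCLM (𝕜 := ℝ) (μ • 1 - ρ • (Aᵀ * A)) (x' - x) := by
  change _ = -g - toEuclideanLin (μ • 1 - ρ • (Aᵀ * A)) (x' - x)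
  subst hy
  simp only [mulVecE_eq_toEuclideanLin, map_add, map_sub, map_smul, LinearMap.sub_apply,
    LinearMap.smul_apply, toLpLin_one, LinearMap.id_apply, toLpLin_mul_same,
    LinearMap.comp_apply] at hx ⊢
  linear_combination (norm := module) hx

theorem album3_dual_step_bound_general {n m : ℕ}
    (A : Matrix (Fin m) (Fin n) ℝ)
    (hH : (A * A.transpose).IsHermitian)
    (γsq : ℝ) (hγsq : γsq = ⨅ i, hH.eigenvalues i) (hpos : 0 < γsq)
    (f₀ : EuclideanSpace ℝ (Fin n) → ℝ) (L : ℝ)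
    (hL : ∀ x x' : EuclideanSpace ℝ (Fin n),
      ‖gradient f₀ x - gradient f₀ x'‖ ≤ L * ‖x - x'‖)
    (ρ μ : ℝ)
    (xm x xp : EuclideanSpace ℝ (Fin n)) (um up ym y yp : EuclideanSpace ℝ (Fin m))
    -- proximal linearized x-step for j = k−1
    (hx1 : μ • (x - xm) = -(gradient f₀ xm + mulVecE A.transpose ym
      + ρ • mulVecE A.transpose (mulVecE A xm - um)))
    -- proximal linearized x-step for j = k
    (hx2 : μ • (xp - x) = -(gradient f₀ x + mulVecE A.transpose y
      + ρ • mulVecE A.transpose (mulVecE A x - up)))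
    -- multiplier steps for j = k−1 and j = k
    (hy1 : y = ym + ρ • (mulVecE A x - um))
    (hy2 : yp = y + ρ • (mulVecE A xp - up)) :
    ‖yp - y‖ ^ 2
      ≤ (2 * ‖Matrix.toEuclideanCLM (𝕜 := ℝ)
            (μ • (1 : Matrix (Fin n) (Fin n) ℝ) - ρ • (A.transpose * A))‖ ^ 2 / γsq)
          * ‖xp - x‖ ^ 2
        + (2 * (L + ‖Matrix.toEuclideanCLM (𝕜 := ℝ)
            (μ • (1 : Matrix (Fin n) (Fin n) ℝ) - ρ • (A.transpose * A))‖) ^ 2 / γsq)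
          * ‖x - xm‖ ^ 2 := by
  set M := toEuclideanCLM (𝕜 := ℝ) (μ • (1 : Matrix (Fin n) (Fin n) ℝ) - ρ • (Aᵀ * A))
  have hdual : mulVecE Aᵀ (yp - y)
      = (gradient f₀ xm - gradient f₀ x) + M (x - xm) - M (xp - x) :=
    calc mulVecE Aᵀ (yp - y) = mulVecE Aᵀ yp - mulVecE Aᵀ y := map_sub (toEuclideanLin Aᵀ) yp y
      _ = _ := by
        rw [mulVecE_transpose_dual_eq_of_album3_step A hx2 hy2,
          mulVecE_transpose_dual_eq_of_album3_step A hx1 hy1]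
        abel
  have hbound : ‖mulVecE Aᵀ (yp - y)‖ ≤ ‖M‖ * ‖xp - x‖ + (L + ‖M‖) * ‖x - xm‖ :=
    calc ‖mulVecE Aᵀ (yp - y)‖
        ≤ ‖gradient f₀ xm - gradient f₀ x‖ + ‖M (x - xm)‖ + ‖M (xp - x)‖ := by
          rw [hdual]; exact norm_sub_le_of_le (norm_add_le _ _) le_rfl
      _ ≤ L * ‖xm - x‖ + ‖M‖ * ‖x - xm‖ + ‖M‖ * ‖xp - x‖ := by
          gcongr
          exacts [hL xm x, M.le_opNorm _, M.le_opNorm _]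
      _ = ‖M‖ * ‖xp - x‖ + (L + ‖M‖) * ‖x - xm‖ := by rw [norm_sub_rev xm x]; ring
  have hcoercive : γsq * ‖yp - y‖ ^ 2 ≤ ‖mulVecE Aᵀ (yp - y)‖ ^ 2 :=
    hγsq ▸ iInf_eigenvalues_mul_norm_sq_le_norm_toEuclideanLin_transpose_sq A hH (yp - y)
  have hsq := (pow_le_pow_left₀ (norm_nonneg _) hbound 2).trans add_sq_le
  rw [div_mul_eq_mul_div, div_mul_eq_mul_div, ← add_div, le_div_iff₀' hpos]
  calc γsq * ‖yp - y‖ ^ 2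
      ≤ 2 * ((‖M‖ * ‖xp - x‖) ^ 2 + ((L + ‖M‖) * ‖x - xm‖) ^ 2) := hcoercive.trans hsq
    _ = _ := by ring

/-- **Dual step bound for the proximal linearized scheme ALBUM 3** (Lemma 6.4). With
`F` linear (full row rank, `γ² = λ_min(FFᵀ) > 0`), `∇f₀` `L`-Lipschitz on `ℝ^n`, the
proximal linearized `x`-steps and multiplier steps of ALBUM 3 imply, with
`M = μIₙ − ρFᵀF`, `‖y^{k+1} − y^k‖² ≤ (2‖M‖²/γ²)‖x^{k+1} − x^k‖²
+ (2(L + ‖M‖)²/γ²)‖x^k − x^{k−1}‖²`. -/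
theorem album3_dual_step_bound {n m : ℕ}
    (A : Matrix (Fin m) (Fin n) ℝ)
    (hH : (A * A.transpose).IsHermitian)
    (γsq : ℝ) (hγsq : γsq = ⨅ i, hH.eigenvalues i) (hpos : 0 < γsq)
    (f₀ : EuclideanSpace ℝ (Fin n) → ℝ) (hdiff : Differentiable ℝ f₀) (L : ℝ)
    (hL : ∀ x x' : EuclideanSpace ℝ (Fin n),
      ‖gradient f₀ x - gradient f₀ x'‖ ≤ L * ‖x - x'‖)
    (ρ μ : ℝ) (hρ : 0 < ρ) (hμ : 0 < μ)
    (xm x xp : EuclideanSpace ℝ (Fin n)) (um up ym y yp : EuclideanSpace ℝ (Fin m))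
    -- proximal linearized x-step for j = k−1
    (hx1 : μ • (x - xm) = -(gradient f₀ xm + mulVecE A.transpose ym
      + ρ • mulVecE A.transpose (mulVecE A xm - um)))
    -- proximal linearized x-step for j = k
    (hx2 : μ • (xp - x) = -(gradient f₀ x + mulVecE A.transpose y
      + ρ • mulVecE A.transpose (mulVecE A x - up)))
    -- multiplier steps for j = k−1 and j = k
    (hy1 : y = ym + ρ • (mulVecE A x - um))
    (hy2 : yp = y + ρ • (mulVecE A xp - up)) :
    ‖yp - y‖ ^ 2
      ≤ (2 * ‖Matrix.toEuclideanCLM (𝕜 := ℝ)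
            (μ • (1 : Matrix (Fin n) (Fin n) ℝ) - ρ • (A.transpose * A))‖ ^ 2 / γsq)
          * ‖xp - x‖ ^ 2
        + (2 * (L + ‖Matrix.toEuclideanCLM (𝕜 := ℝ)
            (μ • (1 : Matrix (Fin n) (Fin n) ℝ) - ρ • (A.transpose * A))‖) ^ 2 / γsq)
          * ‖x - xm‖ ^ 2 :=
  album3_dual_step_bound_general A hH γsq hγsq hpos f₀ L hL ρ μ xm x xp um up ym y yp hx1 hx2 hy1
    hy2
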